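/- arXiv:2402.01581 — 7 statements merged into one kernel-verified Lean document; each statement's English description precedes it below -/
import Mathlib

section
/- Equivalence of the two formulations of the Kawashima condition: Let m > n ≥ 1 be integers, let A : ℂ^m → ℂ^m be a Hermitian linear map, and let X ⊆ ℂ^m be a linear subspace with dim X = n. Then the following are equivalent: (a) for every nonzero x ∈ X there exists k ∈ {1, …, n} with A^k x ∉ X; (b) no nonzero eigenvector of A lies in X, i.e., whenever x ∈ X, λ ∈ ℂ and A x = λ x, then x = 0. -/
/-!
An eigenvector `x ∈ X` with eigenvalue `c` has `A^k x = c^k x ∈ X` for every `k`. Conversely,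
if `x ≠ 0` and `x, A x, …, A^n x` all lie in `X`, the Krylov subspaces
`K_d = span {x, A x, …, A^(d-1) x}` with `d ≤ n + 1` form a chain inside the `n`-dimensional `X`,
so `K_{d+1} = K_d` for some `d ≤ n`. Then `K_d` is `A`-invariant and contains `x`, hence it is a
nonzero invariant subspace of `X`, and it contains an eigenvector because `ℂ` is algebraically
closed.
-/

open Module Submodule

variable {K V : Type*} [Field K] [AddCommGroup V] [Module K V]

theorem Submodule.exists_succ_eq_of_finrank_le [FiniteDimensional K V] {p : ℕ → Submodule K V}
    (hp : Monotone p) {n : ℕ} (h : finrank K (p (n + 1)) ≤ n) : ∃ d ≤ n, p (d + 1) = p d := by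
  by_contra! hne
  have hgrow : ∀ d ≤ n + 1, d ≤ finrank K (p d) := by
    intro d hd
    induction d with
    | zero => exact Nat.zero_le _
    | succ d ih =>
      have hlt : p d < p (d + 1) := lt_of_le_of_ne (hp d.le_succ) (hne d (by omega)).symm
      exact (ih (by omega)).trans_lt (finrank_lt_finrank_of_lt hlt)
  have := hgrow (n + 1) le_rfl
  omega

namespace Module.End

def krylovSubspace (f : End K V) (x : V) (d : ℕ) : Submodule K V :=
  span K ((fun i => (f ^ i) x) '' Set.Iio d)

variable (f : End K V) (x : V)

theorem pow_mem_krylovSubspace {i d : ℕ} (hi : i < d) : (f ^ i) x ∈ f.krylovSubspace x d :=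
  subset_span ⟨i, hi, rfl⟩

theorem krylovSubspace_mono : Monotone (f.krylovSubspace x) :=
  fun _ _ hde => span_mono (Set.image_mono (Set.Iio_subset_Iio hde))

theorem krylovSubspace_le {d : ℕ} {X : Submodule K V} (h : ∀ i < d, (f ^ i) x ∈ X) :
    f.krylovSubspace x d ≤ X :=
  span_le.mpr <| by rintro _ ⟨i, hi, rfl⟩; exact h i hi

theorem map_krylovSubspace_le (d : ℕ) :
    (f.krylovSubspace x d).map f ≤ f.krylovSubspace x (d + 1) := by
  rw [krylovSubspace, map_span, span_le]
  rintro _ ⟨_, ⟨i, hi, rfl⟩, rfl⟩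
  rw [← Module.End.mul_apply, ← pow_succ']
  exact f.pow_mem_krylovSubspace x (by simpa using hi)

theorem krylovSubspace_mem_invtSubmodule {d : ℕ}
    (h : f.krylovSubspace x (d + 1) = f.krylovSubspace x d) :
    f.krylovSubspace x d ∈ f.invtSubmodule := by
  rw [mem_invtSubmodule_iff_map_le]
  exact h ▸ f.map_krylovSubspace_le x d

theorem exists_hasEigenvector_mem_of_mem_invtSubmodule [IsAlgClosed K] [FiniteDimensional K V]
    {p : Submodule K V} (hp : p ≠ ⊥) (hfp : p ∈ f.invtSubmodule) :
    ∃ c v, v ∈ p ∧ f.HasEigenvector c v := by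
  have : Nontrivial p := nontrivial_iff_ne_bot.mpr hp
  obtain ⟨c, hc⟩ := Module.End.exists_eigenvalue (f.restrict hfp)
  obtain ⟨v, hv⟩ := hc.exists_hasEigenvector
  refine ⟨c, v, v.2, mem_eigenspace_iff.mpr ?_, by simpa using hv.2⟩
  exact congrArg Subtype.val hv.apply_eq_smul

theorem exists_hasEigenvector_mem_of_forall_pow_mem [IsAlgClosed K] [FiniteDimensional K V]
    {X : Submodule K V} (hx : x ≠ 0) (hX : ∀ k ≤ finrank K X, (f ^ k) x ∈ X) :
    ∃ c v, v ∈ X ∧ f.HasEigenvector c v := by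
  have hle : ∀ {d}, d ≤ finrank K X + 1 → f.krylovSubspace x d ≤ X :=
    fun hd => f.krylovSubspace_le x fun i hi => hX i (by omega)
  obtain ⟨d, hd, hstab⟩ := exists_succ_eq_of_finrank_le (f.krylovSubspace_mono x)
    (finrank_mono (hle le_rfl))
  have hxd : x ∈ f.krylovSubspace x d := by
    simpa [← hstab] using f.pow_mem_krylovSubspace x (Nat.succ_pos d)
  obtain ⟨c, v, hv, hcv⟩ := f.exists_hasEigenvector_mem_of_mem_invtSubmodule
    ((Submodule.ne_bot_iff _).mpr ⟨x, hxd, hx⟩) (f.krylovSubspace_mem_invtSubmodule x hstab)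
  exact ⟨c, v, hle (by omega) hv, hcv⟩

end Module.End

theorem kawashima_condition_equivalence_general
    (m n : ℕ)
    (A : Module.End ℂ (EuclideanSpace ℂ (Fin m)))
    (X : Submodule ℂ (EuclideanSpace ℂ (Fin m)))
    (hX : Module.finrank ℂ X = n) :
    (∀ x ∈ X, x ≠ 0 → ∃ k : ℕ, 1 ≤ k ∧ k ≤ n ∧ (A ^ k) x ∉ X) ↔
      (∀ x ∈ X, ∀ c : ℂ, A x = c • x → x = 0) := by
  constructor
  · intro h x hx c hAx
    by_contra hx0
    obtain ⟨k, -, -, hk⟩ := h x hx hx0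
    have hv : A.HasEigenvector c x := ⟨Module.End.mem_eigenspace_iff.mpr hAx, hx0⟩
    exact hk (hv.pow_apply k ▸ X.smul_mem _ hx)
  · intro h x hx hx0
    by_contra! hpow
    have hiterates : ∀ k ≤ finrank ℂ X, (A ^ k) x ∈ X := by
      rintro (_ | k) hk
      · simpa using hx
      · exact hpow (k + 1) (by omega) (by omega)
    obtain ⟨c, v, hv, hcv⟩ := A.exists_hasEigenvector_mem_of_forall_pow_mem x hx0 hiterates
    exact hcv.2 (h v hv c hcv.apply_eq_smul)

/-- **Equivalence of the two formulations of the Kawashima condition.**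
Let `A` be a Hermitian linear map on `ℂ^m` and `X ⊆ ℂ^m` an `n`-dimensional subspace
with `1 ≤ n < m`.  Then: for every nonzero `x ∈ X` there is `k ∈ {1, …, n}` with
`A^k x ∉ X`, if and only if no nonzero eigenvector of `A` lies in `X`. -/
theorem kawashima_condition_equivalence
    (m n : ℕ) (hn : 1 ≤ n) (hnm : n < m)
    (A : Module.End ℂ (EuclideanSpace ℂ (Fin m)))
    (hA : ∀ u w : EuclideanSpace ℂ (Fin m), (inner ℂ (A u) w : ℂ) = inner ℂ u (A w))
    (X : Submodule ℂ (EuclideanSpace ℂ (Fin m)))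
    (hX : Module.finrank ℂ X = n) :
    (∀ x ∈ X, x ≠ 0 → ∃ k : ℕ, 1 ≤ k ∧ k ≤ n ∧ (A ^ k) x ∉ X) ↔
      (∀ x ∈ X, ∀ c : ℂ, A x = c • x → x = 0) :=
  kawashima_condition_equivalence_general m n A X hX
end

section
/- Existence of Kawashima compensators: Let m > n ≥ 1 be integers, let X ⊆ ℂ^m be a subspace with dim X = n, let Y = X^⊥, and let P_X, P_Y denote the orthogonal projections onto X and Y. Let A : ℂ^m → ℂ^m be Hermitian and satisfy the Kawashima condition relative to X. Then there exist a skew-adjoint linear map K : ℂ^m → ℂ^m (i.e., ⟨Ku, w⟩ = −⟨u, Kw⟩ for all u, w) and a constant C > 0 such that for every u ∈ ℂ^m, ‖P_X u‖² ≤ C ( Re⟨K A u, u⟩ + ‖P_Y u‖² ). -/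
/-!
Let `Π μ` be the orthogonal projections onto the eigenspaces of `A` and `P` the projection onto
`X`. The operator `K = ∑_{μ ≠ ν} (ν - μ)⁻¹ Π μ P Π ν` is skew-adjoint and solves the Sylvester
equation `K A - A K = P - ∑ μ, Π μ P Π μ`, so that `2 Re⟪K A x, x⟫ = ∑ μ, ‖P_Y (Π μ x)‖²` for
`x ∈ X`. This vanishes only if every `Π μ x` is an eigenvector lying in `X`, hence zero by the
Kawashima condition. Thus `Re⟪K A ·, ·⟫` is positive definite on `X`; compactness of the unit
sphere of `X` and an AM-GM bound on the cross terms between `P_X u` and `P_Y u` then give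
`δ ‖P_X u‖² ≤ Re⟪K A u, u⟫ + D ‖P_Y u‖²`, and rescaling `K` yields the constant `C`.
-/

open Module End RCLike
open scoped InnerProductSpace ComplexConjugate

section Sylvester

variable {R M ι : Type*} [Field R] [AddCommGroup M] [Module R M] [Fintype ι]

/-- The diagonal terms vanish since `0⁻¹ = 0`. -/
def sylvesterSolution (p : ι → End R M) (μ : ι → R) (P : End R M) : End R M :=
  ∑ i, ∑ j, (μ j - μ i)⁻¹ • (p i * P * p j)

theorem sylvesterSolution_mul_sub_mul {p : ι → End R M} {μ : ι → R} {A : End R M}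
    (P : End R M) (hμ : Function.Injective μ) (hp : ∑ i, p i = 1)
    (hpA : ∀ i, p i * A = μ i • p i) (hAp : ∀ i, A * p i = μ i • p i) :
    sylvesterSolution p μ P * A - A * sylvesterSolution p μ P = P - ∑ i, p i * P * p i := by
  classical
  have hcoef : ∀ i j, (μ j - μ i)⁻¹ * (μ j - μ i) = 1 - if i = j then 1 else 0 := by
    intro i j
    split_ifs with hij
    · simp [hij]
    · rw [sub_zero]
      exact inv_mul_cancel₀ (sub_ne_zero.mpr fun h => hij (hμ h).symm)
  calc sylvesterSolution p μ P * A - A * sylvesterSolution p μ P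
      = ∑ i, ∑ j, ((μ j - μ i)⁻¹ * (μ j - μ i)) • (p i * P * p j) := by
        simp only [sylvesterSolution, Finset.sum_mul, Finset.mul_sum, ← Finset.sum_sub_distrib]
        refine Finset.sum_congr rfl fun i _ => Finset.sum_congr rfl fun j _ => ?_
        rw [smul_mul_assoc, mul_assoc, hpA, mul_smul_comm, mul_smul_comm, ← mul_assoc A,
          ← mul_assoc A, hAp, smul_mul_assoc, smul_mul_assoc, smul_smul, smul_smul, ← sub_smul,
          mul_sub]
    _ = ∑ i, ∑ j, p i * P * p j - ∑ i, p i * P * p i := by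
        simp only [hcoef, sub_smul, ite_smul, one_smul, zero_smul, Finset.sum_sub_distrib,
          Finset.sum_ite_eq, Finset.mem_univ, if_true]
    _ = P - ∑ i, p i * P * p i := by
        simp only [← Finset.mul_sum, ← Finset.sum_mul, hp, mul_one, one_mul]

end Sylvester

variable {𝕜 E : Type*} [RCLike 𝕜] [NormedAddCommGroup E] [InnerProductSpace 𝕜 E]

section InnerProduct

variable {ι : Type*} [Fintype ι]

theorem inner_sylvesterSolution_left_eq_neg_right {p : ι → E →ₗ[𝕜] E} {μ : ι → 𝕜}
    {P : E →ₗ[𝕜] E} (hp : ∀ i, (p i).IsSymmetric) (hμ : ∀ i, conj (μ i) = μ i)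
    (hP : P.IsSymmetric) (u w : E) :
    ⟪sylvesterSolution p μ P u, w⟫_𝕜 = -⟪u, sylvesterSolution p μ P w⟫_𝕜 := by
  simp only [sylvesterSolution, LinearMap.coe_sum, Finset.sum_apply, LinearMap.smul_apply,
    Module.End.mul_apply, sum_inner, inner_sum, inner_smul_left, inner_smul_right, hp _ _, hP _ _]
  rw [Finset.sum_comm, ← Finset.sum_neg_distrib]
  refine Finset.sum_congr rfl fun i _ => ?_
  rw [← Finset.sum_neg_distrib]
  refine Finset.sum_congr rfl fun j _ => ?_
  rw [map_inv₀, map_sub, hμ, hμ, ← neg_mul, ← inv_neg, neg_sub]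

theorem two_mul_re_inner_apply_apply_self {K A : E →ₗ[𝕜] E}
    (hK : ∀ u w, ⟪K u, w⟫_𝕜 = -⟪u, K w⟫_𝕜) (hA : A.IsSymmetric) (u : E) :
    2 * re ⟪K (A u), u⟫_𝕜 = re ⟪(K * A - A * K) u, u⟫_𝕜 := by
  have h : re ⟪A (K u), u⟫_𝕜 = -re ⟪K (A u), u⟫_𝕜 := by
    rw [hA, hK, map_neg, inner_re_symm]
  rw [LinearMap.sub_apply, inner_sub_left, map_sub, Module.End.mul_apply, Module.End.mul_apply, h]
  ring

theorem Submodule.re_inner_starProjection_eq_norm_sq (K : Submodule 𝕜 E)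
    [K.HasOrthogonalProjection] (v : E) :
    re ⟪K.starProjection v, v⟫_𝕜 = ‖K.starProjection v‖ ^ 2 := by
  rw [K.re_inner_starProjection_eq_normSq, K.starProjection_apply, Submodule.coe_norm]

theorem re_inner_sub_sum_starProjection {V : ι → Submodule 𝕜 E}
    [∀ i, (V i).HasOrthogonalProjection] (hV : ∑ i, ((V i).starProjection : E →ₗ[𝕜] E) = 1)
    (X : Submodule 𝕜 E) [X.HasOrthogonalProjection] {u : E} (hu : u ∈ X) :
    re ⟪((X.starProjection : E →ₗ[𝕜] E) -
        ∑ i, ((V i).starProjection : E →ₗ[𝕜] E) * X.starProjection * (V i).starProjection) u,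
        u⟫_𝕜 =
      ∑ i, ‖Xᗮ.starProjection ((V i).starProjection u)‖ ^ 2 := by
  have hnorm : ‖u‖ ^ 2 = ∑ i, ‖(V i).starProjection u‖ ^ 2 := by
    have hsum : ∑ i, (V i).starProjection u = u := by simpa using congr($hV u)
    calc ‖u‖ ^ 2 = re ⟪∑ i, (V i).starProjection u, u⟫_𝕜 := by rw [hsum, inner_self_eq_norm_sq]
      _ = _ := by simp only [sum_inner, map_sum, Submodule.re_inner_starProjection_eq_norm_sq]
  have hdiag : ∀ i, re ⟪(V i).starProjection (X.starProjection ((V i).starProjection u)), u⟫_𝕜 =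
      ‖X.starProjection ((V i).starProjection u)‖ ^ 2 := fun i => by
    rw [Submodule.inner_starProjection_left_eq_right, X.re_inner_starProjection_eq_norm_sq]
  simp only [LinearMap.sub_apply, LinearMap.coe_sum, Finset.sum_apply, Module.End.mul_apply,
    inner_sub_left, sum_inner, map_sub, map_sum, hdiag, ContinuousLinearMap.coe_coe,
    X.starProjection_eq_self_iff.mpr hu, inner_self_eq_norm_sq, hnorm, ← Finset.sum_sub_distrib,
    X.norm_sq_eq_add_norm_sq_starProjection ((V _).starProjection u), add_sub_cancel_left]

end InnerProduct

section Spectral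

variable [FiniteDimensional 𝕜 E] {A : E →ₗ[𝕜] E}

theorem LinearMap.IsSymmetric.sum_starProjection_eigenspace (hA : A.IsSymmetric) :
    ∑ μ : Eigenvalues A, ((eigenspace A μ).starProjection : E →ₗ[𝕜] E) = 1 := by
  ext u
  simp only [LinearMap.coe_sum, Finset.sum_apply, ContinuousLinearMap.coe_coe,
    Module.End.one_apply]
  refine hA.orthogonalFamily_eigenspaces'.sum_projection_of_mem_iSup u ?_
  rw [Submodule.orthogonal_eq_bot_iff.mp hA.orthogonalComplement_iSup_eigenspaces_eq_bot']
  exact Submodule.mem_top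

theorem Module.End.mul_starProjection_eigenspace (A : End 𝕜 E) (μ : 𝕜) :
    A * (eigenspace A μ).starProjection = μ • ((eigenspace A μ).starProjection : E →ₗ[𝕜] E) :=
  LinearMap.ext fun u => mem_eigenspace_iff.mp ((eigenspace A μ).starProjection_apply_mem u)

theorem LinearMap.IsSymmetric.starProjection_eigenspace_mul (hA : A.IsSymmetric) {μ : 𝕜}
    (hμ : conj μ = μ) :
    (eigenspace A μ).starProjection * A = μ • ((eigenspace A μ).starProjection : E →ₗ[𝕜] E) := by
  ext u
  refine ext_inner_right 𝕜 fun w => ?_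
  have hAw := congr($(Module.End.mul_starProjection_eigenspace A μ) w)
  simp only [Module.End.mul_apply, LinearMap.smul_apply, ContinuousLinearMap.coe_coe] at hAw ⊢
  rw [Submodule.inner_starProjection_left_eq_right, hA, hAw, inner_smul_right, inner_smul_left, hμ,
    Submodule.inner_starProjection_left_eq_right]

theorem LinearMap.IsSymmetric.exists_skew_re_inner_apply_apply_pos (hA : A.IsSymmetric)
    (X : Submodule 𝕜 E) (hKaw : ∀ x ∈ X, ∀ c : 𝕜, A x = c • x → x = 0) :
    ∃ K : E →ₗ[𝕜] E, (∀ u w, ⟪K u, w⟫_𝕜 = -⟪u, K w⟫_𝕜) ∧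
      ∀ x ∈ X, x ≠ 0 → 0 < re ⟪K (A x), x⟫_𝕜 := by
  set p : Eigenvalues A → E →ₗ[𝕜] E := fun μ => (eigenspace A μ).starProjection
  have hsum : ∑ μ, p μ = 1 := hA.sum_starProjection_eigenspace
  have hconj : ∀ μ : Eigenvalues A, conj μ.val = μ.val := fun μ => hA.conj_eigenvalue_eq_self μ.2
  set K := sylvesterSolution p Subtype.val X.starProjection
  have hK : ∀ u w, ⟪K u, w⟫_𝕜 = -⟪u, K w⟫_𝕜 := inner_sylvesterSolution_left_eq_neg_right
    (fun μ => (eigenspace A μ).starProjection_isSymmetric) hconj X.starProjection_isSymmetric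
  refine ⟨K, hK, fun x hx hx0 => ?_⟩
  have h2 : 2 * re ⟪K (A x), x⟫_𝕜 = ∑ μ, ‖Xᗮ.starProjection (p μ x)‖ ^ 2 := by
    rw [two_mul_re_inner_apply_apply_self hK hA,
      sylvesterSolution_mul_sub_mul (ι := Eigenvalues A) _ Subtype.val_injective hsum
        (fun μ => hA.starProjection_eigenspace_mul (hconj μ))
        (fun μ => Module.End.mul_starProjection_eigenspace A μ),
      re_inner_sub_sum_starProjection (ι := Eigenvalues A) hsum X hx]
    rfl
  -- If the sum vanished, every spectral component of `x` would be an eigenvector in `X`.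
  suffices 0 < ∑ μ, ‖Xᗮ.starProjection (p μ x)‖ ^ 2 by linarith
  refine (Finset.sum_nonneg fun μ _ => sq_nonneg _).lt_of_ne fun h0 => hx0 ?_
  have hmem : ∀ μ, p μ x ∈ X := fun μ => by
    have := (Finset.sum_eq_zero_iff_of_nonneg fun μ _ => sq_nonneg _).mp h0.symm μ
      (Finset.mem_univ μ)
    rw [sq_eq_zero_iff, norm_eq_zero, Submodule.starProjection_apply_eq_zero_iff,
      Submodule.orthogonal_orthogonal] at this
    exact this
  rw [← show ∑ μ, p μ x = x by simpa using congr($hsum x)]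
  exact Finset.sum_eq_zero fun μ _ => hKaw _ (hmem μ) μ
    congr($(Module.End.mul_starProjection_eigenspace A μ) x)

end Spectral

section Coercivity

variable (B : E →L[𝕜] E)

theorem neg_mul_norm_le_re_inner_apply (v w : E) : -(‖B‖ * ‖v‖ * ‖w‖) ≤ re ⟪B v, w⟫_𝕜 := by
  refine neg_le_of_neg_le ((neg_le_abs _).trans ?_)
  calc |re ⟪B v, w⟫_𝕜| ≤ ‖B v‖ * ‖w‖ := (abs_re_le_norm _).trans (norm_inner_le_norm _ _)
    _ ≤ ‖B‖ * ‖v‖ * ‖w‖ := by gcongr; exact B.le_opNorm v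

theorem re_inner_apply_self_sub_le_re_inner_apply_add (x y : E) :
    re ⟪B x, x⟫_𝕜 - ‖B‖ * (2 * ‖x‖ * ‖y‖ + ‖y‖ ^ 2) ≤ re ⟪B (x + y), x + y⟫_𝕜 := by
  have hxy := neg_mul_norm_le_re_inner_apply B x y
  have hyx := neg_mul_norm_le_re_inner_apply B y x
  have hyy := neg_mul_norm_le_re_inner_apply B y y
  simp only [map_add, inner_add_left, inner_add_right]
  linarith

theorem exists_pos_mul_norm_sq_le_re_inner_apply_self (X : Submodule 𝕜 E)
    [FiniteDimensional 𝕜 X] (hB : ∀ x ∈ X, x ≠ 0 → 0 < re ⟪B x, x⟫_𝕜) :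
    ∃ δ > 0, ∀ x ∈ X, δ * ‖x‖ ^ 2 ≤ re ⟪B x, x⟫_𝕜 := by
  have hcont : Continuous fun x : X => re ⟪B x, x⟫_𝕜 := by fun_prop
  obtain ⟨δ, hδ, hδS⟩ := (isCompact_sphere (0 : X) 1).exists_forall_le' hcont.continuousOn
    fun x hx => hB x x.2 (by simpa using Metric.ne_of_mem_sphere hx one_ne_zero)
  refine ⟨δ, hδ, fun x hx => ?_⟩
  rcases eq_or_ne x 0 with rfl | hx0
  · simp
  have hscale := hδS ((‖x‖⁻¹ : 𝕜) • ⟨x, hx⟩) (by simp [norm_smul, hx0])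
  simp only [Submodule.coe_smul, map_smul, inner_smul_left, inner_smul_right, ← mul_assoc]
    at hscale
  rw [map_inv₀, conj_ofReal, ← ofReal_inv, ← ofReal_mul, re_ofReal_mul, ← mul_inv, ← sq] at hscale
  rwa [le_inv_mul_iff₀ (by positivity), mul_comm] at hscale

theorem exists_mul_norm_sq_starProjection_le (X : Submodule 𝕜 E) [FiniteDimensional 𝕜 X]
    (hB : ∀ x ∈ X, x ≠ 0 → 0 < re ⟪B x, x⟫_𝕜) :
    ∃ δ > 0, ∃ D ≥ 0, ∀ u, δ * ‖X.starProjection u‖ ^ 2 ≤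
      re ⟪B u, u⟫_𝕜 + D * ‖Xᗮ.starProjection u‖ ^ 2 := by
  obtain ⟨δ, hδ, hδX⟩ := exists_pos_mul_norm_sq_le_re_inner_apply_self B X hB
  refine ⟨δ / 2, by positivity, 2 * ‖B‖ ^ 2 / δ + ‖B‖, by positivity, fun u => ?_⟩
  set x := X.starProjection u
  set y := Xᗮ.starProjection u
  have hcross := re_inner_apply_self_sub_le_re_inner_apply_add B x y
  rw [X.starProjection_add_starProjection_orthogonal u] at hcross
  have hx := hδX x (X.starProjection_apply_mem u)
  have hamgm : 2 * ‖B‖ * ‖x‖ * ‖y‖ ≤ δ / 2 * ‖x‖ ^ 2 + 2 * ‖B‖ ^ 2 / δ * ‖y‖ ^ 2 := by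
    field_simp
    nlinarith [sq_nonneg (δ * ‖x‖ - 2 * ‖B‖ * ‖y‖)]
  linarith

end Coercivity

theorem kawashima_compensator_exists_general
    (m : ℕ)
    (X : Submodule ℂ (EuclideanSpace ℂ (Fin m)))
    (A : Module.End ℂ (EuclideanSpace ℂ (Fin m)))
    (hA : ∀ u w : EuclideanSpace ℂ (Fin m), (inner ℂ (A u) w : ℂ) = inner ℂ u (A w))
    (hKaw : ∀ x ∈ X, ∀ c : ℂ, A x = c • x → x = 0) :
    ∃ K : Module.End ℂ (EuclideanSpace ℂ (Fin m)),
      (∀ u w : EuclideanSpace ℂ (Fin m), (inner ℂ (K u) w : ℂ) = -inner ℂ u (K w)) ∧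
      ∃ C > (0 : ℝ), ∀ u : EuclideanSpace ℂ (Fin m),
        ‖(X.orthogonalProjectionOnto u : EuclideanSpace ℂ (Fin m))‖ ^ 2 ≤
          C * ((inner ℂ (K (A u)) u : ℂ).re +
            ‖(Xᗮ.orthogonalProjectionOnto u : EuclideanSpace ℂ (Fin m))‖ ^ 2) := by
  obtain ⟨K, hK_skew, hK_pos⟩ :=
    LinearMap.IsSymmetric.exists_skew_re_inner_apply_apply_pos hA X hKaw
  obtain ⟨δ, hδ, D, hD, hcoer⟩ :=
    exists_mul_norm_sq_starProjection_le (K ∘ₗ A).toContinuousLinearMap X hK_pos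
  set ε : ℝ := (1 + D)⁻¹
  refine ⟨(ε : ℂ) • K, fun u w => ?_, (1 + D) / δ, by positivity, fun u => ?_⟩
  · rw [LinearMap.smul_apply, LinearMap.smul_apply, inner_smul_left, inner_smul_right, hK_skew,
      Complex.conj_ofReal, mul_neg]
  · have hu := hcoer u
    simp only [LinearMap.coe_toContinuousLinearMap', LinearMap.comp_apply, RCLike.re_to_complex,
      Submodule.starProjection_apply] at hu
    have hε : (1 + D) * ε = 1 := mul_inv_cancel₀ (by positivity)
    rw [LinearMap.smul_apply, inner_smul_left, Complex.conj_ofReal, Complex.re_ofReal_mul,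
      div_mul_eq_mul_div, le_div_iff₀ hδ, mul_add, ← mul_assoc, hε, one_mul]
    linarith [sq_nonneg ‖(Xᗮ.orthogonalProjectionOnto u : EuclideanSpace ℂ (Fin m))‖]

/-- **Existence of Kawashima compensators.**
Let `X ⊆ ℂ^m` be an `n`-dimensional subspace (`1 ≤ n < m`), `Y = Xᗮ`, and let
`A` be a Hermitian linear map satisfying the Kawashima condition relative to `X`
(no nonzero eigenvector of `A` lies in `X`).  Then there is a skew-adjoint `K`
and `C > 0` with `‖P_X u‖² ≤ C (Re⟨KAu, u⟩ + ‖P_Y u‖²)` for all `u`. -/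
theorem kawashima_compensator_exists
    (m n : ℕ) (hn : 1 ≤ n) (hnm : n < m)
    (X : Submodule ℂ (EuclideanSpace ℂ (Fin m)))
    (hX : Module.finrank ℂ X = n)
    (A : Module.End ℂ (EuclideanSpace ℂ (Fin m)))
    (hA : ∀ u w : EuclideanSpace ℂ (Fin m), (inner ℂ (A u) w : ℂ) = inner ℂ u (A w))
    (hKaw : ∀ x ∈ X, ∀ c : ℂ, A x = c • x → x = 0) :
    ∃ K : Module.End ℂ (EuclideanSpace ℂ (Fin m)),
      (∀ u w : EuclideanSpace ℂ (Fin m), (inner ℂ (K u) w : ℂ) = -inner ℂ u (K w)) ∧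
      ∃ C > (0 : ℝ), ∀ u : EuclideanSpace ℂ (Fin m),
        ‖(X.orthogonalProjectionOnto u : EuclideanSpace ℂ (Fin m))‖ ^ 2 ≤
          C * ((inner ℂ (K (A u)) u : ℂ).re +
            ‖(Xᗮ.orthogonalProjectionOnto u : EuclideanSpace ℂ (Fin m))‖ ^ 2) :=
  kawashima_compensator_exists_general m X A hA hKaw
end

section
/- Steady Kawashima estimate and invertibility: Let m > n ≥ 1, let X ⊆ ℂ^m be a subspace with dim X = n, Y = X^⊥, and P_X, P_Y the orthogonal projections onto X and Y. Let A : ℂ^m → ℂ^m be Hermitian and satisfy the Kawashima condition relative to X, and let L : ℂ^m → ℂ^m be Hermitian negative semidefinite with ker L = X. Then there exists C > 0, depending only on A, L and X, such that for every τ ∈ ℝ \ {0} and all u, f ∈ ℂ^m with iτ A u + L u + f = 0 one has ‖u‖ ≤ C max(1, τ^{-2}) ‖f‖; in particular, for every τ ≠ 0 the map iτ A + L is invertible. Moreover, for 0 < |τ| ≤ 1 one has the refined bound ‖P_Y u‖² + τ² ‖P_X u‖² ≤ C ( ‖P_Y f‖² + τ^{-2} ‖P_X f‖² ). -/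
/-!
Pairing the equation `iτ A u + L u + f = 0` with `u` kills the Hermitian term, so
`re ⟪f, u⟫ = -re ⟪L u, u⟫`; as `-L` is positive with kernel `X`, this controls `‖P_Y u‖²`.
The equation also gives `|τ| ‖A u‖ ≤ ‖L u‖ + ‖f‖`, and since the Kawashima condition makes `A`
injective on `X`, `‖A u‖` controls `‖P_X u‖` up to `‖P_Y u‖`. With the weight `θ = min 1 |τ|`
the two estimates close into `‖P_Y u‖ + θ ‖P_X u‖ ≤ D (‖P_Y f‖ + ‖P_X f‖ / θ)`; squaring it gives
the refined bound, dividing by `θ` the bound on `‖u‖`, which in turn forces `iτ A + L` to be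
injective, hence bijective.
-/

open LinearMap Submodule Complex
open scoped InnerProductSpace

theorem LinearMap.bijective_of_norm_le_mul_norm_apply {𝕜 E : Type*} [NormedField 𝕜]
    [NormedAddCommGroup E] [NormedSpace 𝕜 E] [FiniteDimensional 𝕜 E] (T : E →ₗ[𝕜] E) (c : ℝ)
    (h : ∀ u, ‖u‖ ≤ c * ‖T u‖) : Function.Bijective T := by
  have hinj : Function.Injective T := by
    rw [← ker_eq_bot, ker_eq_bot']
    intro u hu
    simpa [hu] using h u
  exact ⟨hinj, injective_iff_surjective.mp hinj⟩

section

variable {𝕜 E F : Type*} [RCLike 𝕜] [NormedAddCommGroup E] [InnerProductSpace 𝕜 E]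
  [NormedAddCommGroup F] [InnerProductSpace 𝕜 F]

theorem LinearMap.exists_norm_le_mul_norm_apply_of_disjoint_ker (S : E →ₗ[𝕜] F)
    (U : Submodule 𝕜 E) [FiniteDimensional 𝕜 U] (hU : Disjoint U (ker S)) :
    ∃ K : ℝ, 0 ≤ K ∧ ∀ x ∈ U, ‖x‖ ≤ K * ‖S x‖ := by
  have hinj : Function.Injective (S ∘ₗ U.subtype) := by
    rw [← ker_eq_bot, ker_comp, ← disjoint_iff_comap_eq_bot]
    exact hU
  obtain ⟨K, -, hK⟩ := (S ∘ₗ U.subtype).injective_iff_antilipschitz.mp hinj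
  refine ⟨K, K.2, fun x hx => ?_⟩
  simpa using hK.le_mul_norm_sub ⟨x, hx⟩ 0

theorem LinearMap.apply_starProjection_ker_orthogonal (T : E →ₗ[𝕜] F)
    [(ker T).HasOrthogonalProjection] (u : E) : T ((ker T)ᗮ.starProjection u) = T u := by
  rw [starProjection_orthogonal_val, map_sub, mem_ker.mp ((ker T).starProjection_apply_mem u),
    sub_zero]

theorem Submodule.re_inner_le_norm_starProjection_mul_add (K : Submodule 𝕜 E)
    [K.HasOrthogonalProjection] (f u : E) :
    RCLike.re ⟪f, u⟫_𝕜 ≤ ‖K.starProjection f‖ * ‖K.starProjection u‖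
      + ‖Kᗮ.starProjection f‖ * ‖Kᗮ.starProjection u‖ := by
  have hsplit : ⟪f, u⟫_𝕜 = ⟪K.starProjection f, K.starProjection u⟫_𝕜
      + ⟪Kᗮ.starProjection f, Kᗮ.starProjection u⟫_𝕜 := by
    conv_lhs => rw [← K.starProjection_add_starProjection_orthogonal f,
      ← K.starProjection_add_starProjection_orthogonal u]
    rw [inner_add_left, inner_add_right, inner_add_right,
      inner_right_of_mem_orthogonal (K.starProjection_apply_mem f) (Kᗮ.starProjection_apply_mem u),
      inner_left_of_mem_orthogonal (K.starProjection_apply_mem u) (Kᗮ.starProjection_apply_mem f)]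
    ring
  rw [hsplit, map_add]
  gcongr <;> exact (RCLike.re_le_norm _).trans (norm_inner_le_norm _ _)

variable {X : Submodule 𝕜 E} [X.HasOrthogonalProjection] {D θ : ℝ} {u f : E}

theorem norm_le_of_weighted_le (hD : 0 ≤ D) (hθ : 0 < θ) (hθ1 : θ ≤ 1)
    (h : ‖Xᗮ.starProjection u‖ + θ * ‖X.starProjection u‖
      ≤ D * (‖Xᗮ.starProjection f‖ + ‖X.starProjection f‖ / θ)) :
    ‖u‖ ≤ 2 * D * θ⁻¹ ^ 2 * ‖f‖ := by
  have hu : ‖u‖ ≤ ‖X.starProjection u‖ + ‖Xᗮ.starProjection u‖ :=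
    (congrArg norm (X.starProjection_add_starProjection_orthogonal u)).ge.trans (norm_add_le _ _)
  have hq : ‖Xᗮ.starProjection f‖ ≤ ‖f‖ / θ :=
    (Xᗮ.norm_starProjection_apply_le f).trans (le_div_self (norm_nonneg _) hθ hθ1)
  have hθu : θ * ‖u‖ ≤ 2 * D * ‖f‖ / θ := calc
    θ * ‖u‖ ≤ ‖Xᗮ.starProjection u‖ + θ * ‖X.starProjection u‖ := by
      nlinarith [norm_nonneg (Xᗮ.starProjection u)]
    _ ≤ D * (‖f‖ / θ + ‖f‖ / θ) := h.trans (by gcongr; exact X.norm_starProjection_apply_le f)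
    _ = 2 * D * ‖f‖ / θ := by ring
  rw [show 2 * D * θ⁻¹ ^ 2 * ‖f‖ = 2 * D * ‖f‖ / θ / θ by field_simp, le_div_iff₀ hθ, mul_comm]
  exact hθu

theorem sq_add_sq_le_of_weighted_le (hθ : 0 < θ)
    (h : ‖Xᗮ.starProjection u‖ + θ * ‖X.starProjection u‖
      ≤ D * (‖Xᗮ.starProjection f‖ + ‖X.starProjection f‖ / θ)) :
    ‖Xᗮ.starProjection u‖ ^ 2 + θ ^ 2 * ‖X.starProjection u‖ ^ 2
      ≤ 2 * D ^ 2 * (‖Xᗮ.starProjection f‖ ^ 2 + (θ ^ 2)⁻¹ * ‖X.starProjection f‖ ^ 2) := by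
  set a := ‖Xᗮ.starProjection u‖
  set b := ‖X.starProjection u‖
  set q := ‖Xᗮ.starProjection f‖
  set p := ‖X.starProjection f‖
  have hab : 0 ≤ a * (θ * b) := by positivity
  calc a ^ 2 + θ ^ 2 * b ^ 2 ≤ (a + θ * b) ^ 2 := by nlinarith
    _ ≤ (D * (q + p / θ)) ^ 2 := pow_le_pow_left₀ (by positivity) h 2
    _ ≤ 2 * D ^ 2 * (q ^ 2 + (θ ^ 2)⁻¹ * p ^ 2) := by
      rw [inv_mul_eq_div, ← div_pow, mul_pow, mul_comm 2, mul_assoc]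
      gcongr
      nlinarith [sq_nonneg (q - p / θ)]

end

theorem le_mul_of_sq_le_mul_add {a R s t : ℝ} (hR : 0 ≤ R) (hs : 0 ≤ s) (ht : 0 ≤ t)
    (h : a ^ 2 ≤ s * R * a + t * R ^ 2) : a ≤ (s + t + 1) * R := by
  by_contra! hlt
  have hRa : R ≤ a := le_trans (by nlinarith) hlt.le
  have ha : 0 < a := hR.trans_lt (by nlinarith)
  nlinarith [mul_le_mul_of_nonneg_left hRa hR, mul_lt_mul_of_pos_right hlt ha]

theorem inv_min_one_abs_sq {τ : ℝ} (hτ : τ ≠ 0) : (min 1 |τ|)⁻¹ ^ 2 = max 1 (τ ^ 2)⁻¹ := by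
  rcases le_total |τ| 1 with h | h
  · have : 1 ≤ (τ ^ 2)⁻¹ :=
      one_le_inv₀ (by positivity) |>.mpr (by nlinarith [sq_abs τ, abs_nonneg τ])
    rw [min_eq_right h, max_eq_right this, inv_pow, sq_abs]
  · have : (τ ^ 2)⁻¹ ≤ 1 := inv_le_one_of_one_le₀ (by nlinarith [sq_abs τ])
    rw [min_eq_left h, max_eq_left this, inv_one, one_pow]

section

variable {E : Type*} [NormedAddCommGroup E] [InnerProductSpace ℂ E]

theorem re_inner_eq_neg_re_inner_of_steady {A L : E →ₗ[ℂ] E} (hA : A.IsSymmetric) {τ : ℝ}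
    {u f : E} (h : ((τ : ℂ) * I) • A u + L u + f = 0) :
    re ⟪f, u⟫_ℂ = -re ⟪L u, u⟫_ℂ := by
  have hA_re : re ⟪((τ : ℂ) * I) • A u, u⟫_ℂ = 0 := by
    rw [inner_smul_left, ← hA.coe_re_inner_apply_self u]
    simp
  have := congrArg (fun v => re ⟪v, u⟫_ℂ) h
  simp only [inner_add_left, add_re, hA_re, inner_zero_left, zero_re, zero_add] at this
  linarith

theorem abs_mul_norm_le_of_steady {A L : E →ₗ[ℂ] E} {τ : ℝ}
    {u f : E} (h : ((τ : ℂ) * I) • A u + L u + f = 0) :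
    |τ| * ‖A u‖ ≤ ‖L u‖ + ‖f‖ := by
  have : ((τ : ℂ) * I) • A u = -(L u + f) := by
    rw [add_assoc] at h; exact eq_neg_of_add_eq_zero_left h
  have hnorm : |τ| * ‖A u‖ = ‖L u + f‖ := by
    simpa only [norm_smul, norm_mul, norm_real, norm_I, mul_one, norm_neg, Real.norm_eq_abs]
      using congrArg norm this
  exact hnorm ▸ norm_add_le _ _

variable [FiniteDimensional ℂ E]

theorem LinearMap.IsPositive.exists_re_inner_eq_norm_sq {T : E →ₗ[ℂ] E} (hT : T.IsPositive) :
    ∃ S : E →ₗ[ℂ] E, ker S = ker T ∧ ∀ u, re ⟪T u, u⟫_ℂ = ‖S u‖ ^ 2 := by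
  have : 0 ≤ LinearMap.toContinuousLinearMap T := by
    rw [ContinuousLinearMap.nonneg_iff_isPositive]
    exact (LinearMap.isPositive_toContinuousLinearMap_iff _).mpr hT
  obtain ⟨S, hS⟩ := CStarAlgebra.nonneg_iff_eq_star_mul_self.mp this
  have hTS : ∀ u, T u = ContinuousLinearMap.adjoint S (S u) := fun u => by
    simpa [ContinuousLinearMap.star_eq_adjoint] using congrArg (· u) hS
  have hnorm : ∀ u, re ⟪T u, u⟫_ℂ = ‖S u‖ ^ 2 := fun u => by
    rw [hTS, ContinuousLinearMap.adjoint_inner_left, inner_self_eq_norm_sq_to_K]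
    norm_cast
  refine ⟨S, ?_, hnorm⟩
  ext u
  simp only [mem_ker]
  constructor
  · intro h
    rw [hTS, show S u = 0 from h, map_zero]
  · intro h
    have := hnorm u
    rw [h, inner_zero_left, zero_re] at this
    simpa using this.symm

theorem LinearMap.IsPositive.exists_sq_norm_starProjection_le {T : E →ₗ[ℂ] E}
    (hT : T.IsPositive) :
    ∃ M : ℝ, 0 ≤ M ∧ ∀ u, ‖(ker T)ᗮ.starProjection u‖ ^ 2 ≤ M * re ⟪T u, u⟫_ℂ := by
  obtain ⟨S, hST, hS⟩ := hT.exists_re_inner_eq_norm_sq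
  obtain ⟨K, hK0, hK⟩ := S.exists_norm_le_mul_norm_apply_of_disjoint_ker (ker S)ᗮ
    (orthogonal_disjoint _).symm
  refine ⟨K ^ 2, sq_nonneg K, fun u => ?_⟩
  rw [hS, ← hST, ← mul_pow, ← S.apply_starProjection_ker_orthogonal]
  gcongr
  exact hK _ (starProjection_apply_mem _ _)

theorem exists_weighted_steady_estimate {A L : E →ₗ[ℂ] E} (hA : A.IsSymmetric)
    (hL : (-L).IsPositive) (hAL : Disjoint (ker L) (ker A)) :
    ∃ D : ℝ, 0 < D ∧ ∀ τ θ : ℝ, 0 < θ → θ ≤ 1 → θ ≤ |τ| → ∀ u f : E,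
      ((τ : ℂ) * I) • A u + L u + f = 0 →
      ‖(ker L)ᗮ.starProjection u‖ + θ * ‖(ker L).starProjection u‖
        ≤ D * (‖(ker L)ᗮ.starProjection f‖ + ‖(ker L).starProjection f‖ / θ) := by
  obtain ⟨M, hM0, hM⟩ := hL.exists_sq_norm_starProjection_le
  rw [ker_neg] at hM
  obtain ⟨K, hK0, hK⟩ := A.exists_norm_le_mul_norm_apply_of_disjoint_ker (ker L) hAL
  set α := ‖A.toContinuousLinearMap‖
  set ℓ := ‖L.toContinuousLinearMap‖
  set D₁ := M * (1 + K * (α + ℓ)) + M * K + 1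
  refine ⟨D₁ + K * ((α + ℓ) * D₁ + 1), by positivity, fun τ θ hθ hθ1 hθτ u f h => ?_⟩
  set a := ‖(ker L)ᗮ.starProjection u‖
  set b := ‖(ker L).starProjection u‖
  set q := ‖(ker L)ᗮ.starProjection f‖
  set p := ‖(ker L).starProjection f‖
  set R := q + p / θ with hR
  have hp : p ≤ p / θ := le_div_self (norm_nonneg _) hθ hθ1
  have hpb : p * b = p / θ * (θ * b) := by field_simp
  have hdissip : a ^ 2 ≤ M * (p * b + q * a) := calc
    a ^ 2 ≤ M * re ⟪(-L) u, u⟫_ℂ := hM u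
    _ = M * re ⟪f, u⟫_ℂ := by
      rw [LinearMap.neg_apply, inner_neg_left, neg_re, re_inner_eq_neg_re_inner_of_steady hA h]
    _ ≤ M * (p * b + q * a) := by
      gcongr; exact (ker L).re_inner_le_norm_starProjection_mul_add f u
  have hAu : |τ| * ‖A u‖ ≤ ℓ * a + q + p := by
    have hLu : ‖L u‖ ≤ ℓ * a :=
      L.apply_starProjection_ker_orthogonal u ▸ L.toContinuousLinearMap.le_opNorm _
    have hf : ‖f‖ ≤ p + q :=
      (congrArg norm ((ker L).starProjection_add_starProjection_orthogonal f)).ge.trans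
        (norm_add_le _ _)
    linarith [abs_mul_norm_le_of_steady h]
  have hb : b ≤ K * (‖A u‖ + α * a) := calc
    b ≤ K * ‖A ((ker L).starProjection u)‖ := hK _ (starProjection_apply_mem _ _)
    _ = K * ‖A u - A ((ker L)ᗮ.starProjection u)‖ := by
      rw [← map_sub, starProjection_orthogonal_val, sub_sub_cancel]
    _ ≤ K * (‖A u‖ + α * a) := by
      gcongr
      exact (norm_sub_le _ _).trans (by gcongr; exact A.toContinuousLinearMap.le_opNorm _)
  have hB : θ * b ≤ K * ((α + ℓ) * a + R) := calc
    θ * b ≤ θ * (K * (‖A u‖ + α * a)) := by gcongr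
    _ = K * (θ * ‖A u‖ + θ * (α * a)) := by ring
    _ ≤ K * ((α + ℓ) * a + R) := by
      have hθA : θ * ‖A u‖ ≤ |τ| * ‖A u‖ := by gcongr
      have hθα : θ * (α * a) ≤ α * a := mul_le_of_le_one_left (by positivity) hθ1
      exact mul_le_mul_of_nonneg_left (by linarith) hK0
  have ha : a ≤ D₁ * R := by
    apply le_mul_of_sq_le_mul_add (by positivity) (by positivity) (by positivity)
    have hpR : p / θ ≤ R := le_add_of_nonneg_left (norm_nonneg _)
    have hqR : q ≤ R := le_add_of_nonneg_right (by positivity)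
    calc a ^ 2 ≤ M * (p / θ * (θ * b) + q * a) := by rw [← hpb]; exact hdissip
      _ ≤ M * (R * (K * ((α + ℓ) * a + R)) + R * a) := by gcongr
      _ = M * (1 + K * (α + ℓ)) * R * a + M * K * R ^ 2 := by ring
  calc a + θ * b ≤ D₁ * R + K * ((α + ℓ) * (D₁ * R) + R) :=
        add_le_add ha (hB.trans (by gcongr))
    _ = (D₁ + K * ((α + ℓ) * D₁ + 1)) * R := by ring

end

theorem steady_kawashima_estimate_general
    (m : ℕ)
    (X : Submodule ℂ (EuclideanSpace ℂ (Fin m)))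
    (A L : Module.End ℂ (EuclideanSpace ℂ (Fin m)))
    (hA : ∀ u w : EuclideanSpace ℂ (Fin m), (inner ℂ (A u) w : ℂ) = inner ℂ u (A w))
    (hKaw : ∀ x ∈ X, ∀ c : ℂ, A x = c • x → x = 0)
    (hL : ∀ u w : EuclideanSpace ℂ (Fin m), (inner ℂ (L u) w : ℂ) = inner ℂ u (L w))
    (hLneg : ∀ u : EuclideanSpace ℂ (Fin m), (inner ℂ (L u) u : ℂ).re ≤ 0)
    (hker : LinearMap.ker L = X) :
    ∃ C > (0 : ℝ), ∀ τ : ℝ, τ ≠ 0 →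
      (∀ u f : EuclideanSpace ℂ (Fin m),
          ((τ : ℂ) * Complex.I) • A u + L u + f = 0 →
          ‖u‖ ≤ C * max 1 (τ ^ 2)⁻¹ * ‖f‖) ∧
      Function.Bijective
        (fun u : EuclideanSpace ℂ (Fin m) => ((τ : ℂ) * Complex.I) • A u + L u) ∧
      (|τ| ≤ 1 → ∀ u f : EuclideanSpace ℂ (Fin m),
          ((τ : ℂ) * Complex.I) • A u + L u + f = 0 →
          ‖(Submodule.orthogonalProjectionOnto Xᗮ u : EuclideanSpace ℂ (Fin m))‖ ^ 2
              + τ ^ 2 * ‖(Submodule.orthogonalProjectionOnto X u : EuclideanSpace ℂ (Fin m))‖ ^ 2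
            ≤ C * (‖(Submodule.orthogonalProjectionOnto Xᗮ f : EuclideanSpace ℂ (Fin m))‖ ^ 2
              + (τ ^ 2)⁻¹ *
                ‖(Submodule.orthogonalProjectionOnto X f : EuclideanSpace ℂ (Fin m))‖ ^ 2)) := by
  subst hker
  have hLpos : (-L).IsPositive :=
    ⟨fun u w => by simp only [LinearMap.neg_apply, inner_neg_left, inner_neg_right, hL u w],
      fun u => by simpa using neg_nonneg.mpr (hLneg u)⟩
  have hdisj : Disjoint (ker L) (ker A) := disjoint_def.mpr fun x hxL hxA =>
    hKaw x hxL 0 (by rw [zero_smul]; exact hxA)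
  obtain ⟨D, hD, hest⟩ := exists_weighted_steady_estimate hA hLpos hdisj
  have hbound : ∀ τ : ℝ, τ ≠ 0 → ∀ u f, ((τ : ℂ) * I) • A u + L u + f = 0 →
      ‖u‖ ≤ 2 * D * max 1 (τ ^ 2)⁻¹ * ‖f‖ := by
    intro τ hτ u f h
    have hθ : 0 < min 1 |τ| := lt_min one_pos (abs_pos.mpr hτ)
    rw [← inv_min_one_abs_sq hτ]
    exact norm_le_of_weighted_le hD.le hθ (min_le_left _ _)
      (hest τ _ hθ (min_le_left _ _) (min_le_right _ _) u f h)
  refine ⟨2 * D + 2 * D ^ 2, by positivity,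
    fun τ hτ => ⟨fun u f h => ?_, ?_, fun hτ1 u f h => ?_⟩⟩
  · exact (hbound τ hτ u f h).trans (by gcongr; nlinarith)
  · refine LinearMap.bijective_of_norm_le_mul_norm_apply (((τ : ℂ) * I) • A + L)
      (2 * D * max 1 (τ ^ 2)⁻¹) fun u => ?_
    have := hbound τ hτ u _ (add_neg_cancel _)
    rwa [norm_neg] at this
  · have hθ : 0 < |τ| := abs_pos.mpr hτ
    have := sq_add_sq_le_of_weighted_le hθ (hest τ _ hθ hτ1 le_rfl u f h)
    rw [sq_abs] at this
    simp only [coe_orthogonalProjectionOnto_apply]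
    exact this.trans (mul_le_mul_of_nonneg_right (by nlinarith) (by positivity))

/-- **Steady Kawashima estimate and invertibility.**
Let `X ⊆ ℂ^m` be `n`-dimensional (`1 ≤ n < m`), `A` Hermitian satisfying the
Kawashima condition relative to `X`, and `L` Hermitian negative semidefinite with
`ker L = X`.  Then there is `C > 0` (depending only on `A`, `L`, `X`) such that for
every `τ ≠ 0` and `iτ A u + L u + f = 0` one has `‖u‖ ≤ C max(1, τ⁻²) ‖f‖`; in
particular `iτA + L` is invertible; moreover for `0 < |τ| ≤ 1` the refined bound
`‖P_Y u‖² + τ²‖P_X u‖² ≤ C (‖P_Y f‖² + τ⁻²‖P_X f‖²)` holds. -/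
theorem steady_kawashima_estimate
    (m n : ℕ) (hn : 1 ≤ n) (hnm : n < m)
    (X : Submodule ℂ (EuclideanSpace ℂ (Fin m)))
    (hX : Module.finrank ℂ X = n)
    (A L : Module.End ℂ (EuclideanSpace ℂ (Fin m)))
    (hA : ∀ u w : EuclideanSpace ℂ (Fin m), (inner ℂ (A u) w : ℂ) = inner ℂ u (A w))
    (hKaw : ∀ x ∈ X, ∀ c : ℂ, A x = c • x → x = 0)
    (hL : ∀ u w : EuclideanSpace ℂ (Fin m), (inner ℂ (L u) w : ℂ) = inner ℂ u (L w))
    (hLneg : ∀ u : EuclideanSpace ℂ (Fin m), (inner ℂ (L u) u : ℂ).re ≤ 0)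
    (hker : LinearMap.ker L = X) :
    ∃ C > (0 : ℝ), ∀ τ : ℝ, τ ≠ 0 →
      (∀ u f : EuclideanSpace ℂ (Fin m),
          ((τ : ℂ) * Complex.I) • A u + L u + f = 0 →
          ‖u‖ ≤ C * max 1 (τ ^ 2)⁻¹ * ‖f‖) ∧
      Function.Bijective
        (fun u : EuclideanSpace ℂ (Fin m) => ((τ : ℂ) * Complex.I) • A u + L u) ∧
      (|τ| ≤ 1 → ∀ u f : EuclideanSpace ℂ (Fin m),
          ((τ : ℂ) * Complex.I) • A u + L u + f = 0 →
          ‖(Submodule.orthogonalProjectionOnto Xᗮ u : EuclideanSpace ℂ (Fin m))‖ ^ 2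
              + τ ^ 2 * ‖(Submodule.orthogonalProjectionOnto X u : EuclideanSpace ℂ (Fin m))‖ ^ 2
            ≤ C * (‖(Submodule.orthogonalProjectionOnto Xᗮ f : EuclideanSpace ℂ (Fin m))‖ ^ 2
              + (τ ^ 2)⁻¹ *
                ‖(Submodule.orthogonalProjectionOnto X f : EuclideanSpace ℂ (Fin m))‖ ^ 2)) :=
  steady_kawashima_estimate_general m X A L hA hKaw hL hLneg hker
end

section
/- Kawashima condition for the nine-moment Landau system, polynomial form: Let p : ℝ³ → ℝ be a polynomial of the form p(v) = a + b₁v₁ + b₂v₂ + b₃v₃ + c|v|² with (a, b₁, b₂, b₃, c) ≠ 0. Then at least one of the two functions v ↦ v₁ p(v) and v ↦ v₁² p(v) does not belong to the real linear span of the five functions 1, v₁, v₂, v₃, |v|². -/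
noncomputable section

/-- The span of the five functions `1, v₁, v₂, v₃, |v|²` on `ℝ³`. -/
def fiveMomentSpan : Submodule ℝ ((Fin 3 → ℝ) → ℝ) :=
  Submodule.span ℝ
    ({fun _ => (1 : ℝ), fun v => v 0, fun v => v 1, fun v => v 2,
      fun v => v 0 ^ 2 + v 1 ^ 2 + v 2 ^ 2} : Set ((Fin 3 → ℝ) → ℝ))

/-- **Kawashima condition for the nine-moment Landau system, polynomial form.**
If `p(v) = a + b₁v₁ + b₂v₂ + b₃v₃ + c|v|²` with `(a,b₁,b₂,b₃,c) ≠ 0`, then at least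
one of `v ↦ v₁ p(v)` and `v ↦ v₁² p(v)` is not in the span of `1, v₁, v₂, v₃, |v|²`. -/
theorem nine_moment_kawashima_polynomial
    (a b₁ b₂ b₃ c : ℝ) (h : ¬(a = 0 ∧ b₁ = 0 ∧ b₂ = 0 ∧ b₃ = 0 ∧ c = 0)) :
    (fun v : Fin 3 → ℝ =>
        v 0 * (a + b₁ * v 0 + b₂ * v 1 + b₃ * v 2 + c * (v 0 ^ 2 + v 1 ^ 2 + v 2 ^ 2)))
        ∉ fiveMomentSpan ∨
    (fun v : Fin 3 → ℝ =>
        (v 0) ^ 2 * (a + b₁ * v 0 + b₂ * v 1 + b₃ * v 2 + c * (v 0 ^ 2 + v 1 ^ 2 + v 2 ^ 2)))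
        ∉ fiveMomentSpan := by
  by_contra hc
  push_neg at hc
  obtain ⟨hq, hr⟩ := hc
  rw [fiveMomentSpan] at hq hr
  simp only [Submodule.mem_span_insert, Submodule.mem_span_singleton] at hq hr
  obtain ⟨q1, z1, ⟨q2, z2, ⟨q3, z3, ⟨q4, z4, ⟨q5, e5⟩, e4⟩, e3⟩, e2⟩, e1⟩ := hq
  obtain ⟨r1, w1, ⟨r2, w2, ⟨r3, w3, ⟨r4, w4, ⟨r5, f5⟩, f4⟩, f3⟩, f2⟩, f1⟩ := hr
  subst e5 e4 e3 e2
  subst f5 f4 f3 f2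
  have Q := fun x y z : ℝ => congrFun e1 ![x, y, z]
  have R := fun x y z : ℝ => congrFun f1 ![x, y, z]
  simp only [Pi.add_apply, Pi.smul_apply, smul_eq_mul, Matrix.cons_val_zero,
    Matrix.cons_val_one, Matrix.head_cons, Matrix.cons_val_two, Matrix.tail_cons] at Q R
  have Q000 := Q 0 0 0; have Q100 := Q 1 0 0; have Qm100 := Q (-1) 0 0
  have Q200 := Q 2 0 0; have Qm200 := Q (-2) 0 0; have Q300 := Q 3 0 0
  have Q010 := Q 0 1 0; have Q020 := Q 0 2 0; have Q001 := Q 0 0 1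
  have Q002 := Q 0 0 2; have Q110 := Q 1 1 0; have Q101 := Q 1 0 1
  have R000 := R 0 0 0; have R100 := R 1 0 0; have Rm100 := R (-1) 0 0
  have R010 := R 0 1 0; have R020 := R 0 2 0; have R001 := R 0 0 1
  norm_num at Q000 Q100 Qm100 Q200 Qm200 Q300 Q010 Q020 Q001 Q002 Q110 Q101 R000 R100 Rm100 R010 R020 R001
  exact h ⟨by linarith, by linarith, by linarith, by linarith, by linarith⟩
end
end

section
/- Symmetrizability plus the Kawashima condition imply steady invertibility: Let n ≥ 1 and let A, B, A⁰ ∈ ℝ^{n×n} be such that A⁰ is symmetric positive definite, A A⁰ is symmetric, and B A⁰ is symmetric positive semidefinite. Assume the Kawashima condition: no nonzero vector of ℂⁿ that is an eigenvector of A A⁰ (viewed as a complex matrix) lies in the kernel of B A⁰ (viewed as a complex matrix). Then for every ξ ∈ ℝ \ {0}, the complex matrix −ξ² B + iξ A : ℂⁿ → ℂⁿ is bijective. -/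
/-!
Multiplying on the right by `A⁰` turns `M = −ξ² B + iξ A` into `M A⁰ = −ξ² K + iξ S` with
`K = B A⁰` positive semidefinite and `S = A A⁰` Hermitian. If `M A⁰ y = 0`, the quadratic forms
`y* K y` and `y* S y` are real, so the real part of `y* (M A⁰) y = 0` gives `y* K y = 0`, hence
`K y = 0`, and then `S y = 0`. A nonzero such `y` would be an eigenvector of `S` (eigenvalue `0`)
in the kernel of `K`, which the Kawashima condition forbids. So `det (M A⁰) ≠ 0`, and therefore
`det M ≠ 0`.
-/

open Complex Matrix ComplexOrder

namespace Matrix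

variable {ι : Type*}

lemma IsSymm.isHermitian_map_ofReal {M : Matrix ι ι ℝ} (hM : M.IsSymm) :
    (M.map ((↑) : ℝ → ℂ)).IsHermitian :=
  IsHermitian.map ((conjTranspose_eq_transpose_of_trivial M).trans hM) _
    fun _ ↦ (conj_ofReal _).symm

variable [Fintype ι]

open scoped MatrixOrder in
lemma PosSemidef.map_ofReal {M : Matrix ι ι ℝ} (hM : M.PosSemidef) :
    (M.map ((↑) : ℝ → ℂ)).PosSemidef := by
  classical
  obtain ⟨C, rfl⟩ := CStarAlgebra.nonneg_iff_eq_star_mul_self.mp hM.nonneg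
  have hmap : (star C * C).map ((↑) : ℝ → ℂ) =
      (C.map ((↑) : ℝ → ℂ))ᴴ * C.map ((↑) : ℝ → ℂ) := by
    rw [← conjTranspose_map _ fun _ ↦ (conj_ofReal _).symm, star_eq_conjTranspose]
    exact Matrix.map_mul (f := ofRealHom)
  exact hmap ▸ posSemidef_conjTranspose_mul_self _

lemma PosSemidef.mulVec_eq_zero_of_smul_add_I_smul_mulVec_eq_zero {K S : Matrix ι ι ℂ}
    (hK : K.PosSemidef) (hS : S.IsHermitian) {a b : ℝ} (ha : a ≠ 0) (hb : b ≠ 0) {y : ι → ℂ}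
    (h : ((a : ℂ) • K + ((b : ℂ) * I) • S) *ᵥ y = 0) : K *ᵥ y = 0 ∧ S *ᵥ y = 0 := by
  set q := star y ⬝ᵥ K *ᵥ y
  set s := star y ⬝ᵥ S *ᵥ y
  have hqs : (a : ℂ) * q + ((b : ℂ) * I) * s = 0 := by
    simpa [q, s, add_mulVec, smul_mulVec, dotProduct_add, dotProduct_smul] using
      congrArg (star y ⬝ᵥ ·) h
  have hq_im : q.im = 0 := hK.isHermitian.im_star_dotProduct_mulVec_self y
  have hs_im : s.im = 0 := hS.im_star_dotProduct_mulVec_self y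
  have hq : q = 0 := by
    have hre := congrArg re hqs
    simp only [add_re, mul_re, mul_im, ofReal_re, ofReal_im, I_re, I_im, hs_im, zero_re,
      zero_mul, mul_zero, mul_one, sub_zero, sub_self, add_zero, mul_eq_zero] at hre
    exact Complex.ext (hre.resolve_left ha) hq_im
  have hKy : K *ᵥ y = 0 := (hK.dotProduct_mulVec_zero_iff y).mp hq
  refine ⟨hKy, ?_⟩
  rw [add_mulVec, smul_mulVec, hKy, smul_zero, zero_add, smul_mulVec, smul_eq_zero] at h
  exact h.resolve_left (mul_ne_zero (ofReal_ne_zero.mpr hb) I_ne_zero)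

end Matrix

theorem symmetrizable_kawashima_invertibility_general
    (n : ℕ) (A B A0 : Matrix (Fin n) (Fin n) ℝ)
    (hAA0 : (A * A0).IsSymm)
    (hBA0 : (B * A0).PosSemidef)
    (hKaw : ∀ (x : Fin n → ℂ) (μ : ℂ), x ≠ 0 →
      (A * A0).map Complex.ofReal *ᵥ x = μ • x →
      (B * A0).map Complex.ofReal *ᵥ x ≠ 0) :
    ∀ ξ : ℝ, ξ ≠ 0 →
      Function.Bijective (fun x : Fin n → ℂ =>
        ((-(ξ : ℂ) ^ 2) • B.map Complex.ofReal
          + ((ξ : ℂ) * Complex.I) • A.map Complex.ofReal) *ᵥ x) := by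
  intro ξ hξ
  set M := (-(ξ : ℂ) ^ 2) • B.map ofReal + ((ξ : ℂ) * I) • A.map ofReal
  have hfactor : M * A0.map ofReal =
      ((-ξ ^ 2 : ℝ) : ℂ) • (B * A0).map ofReal + ((ξ : ℂ) * I) • (A * A0).map ofReal := by
    have hmap_mul (X Y : Matrix (Fin n) (Fin n) ℝ) :
        (X * Y).map ofReal = X.map ofReal * Y.map ofReal :=
      Matrix.map_mul (f := ofRealHom)
    simp only [M, add_mul, smul_mul, hmap_mul, ofReal_neg, ofReal_pow]
  have hdet : (M * A0.map ofReal).det ≠ 0 := by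
    rw [Ne, ← exists_mulVec_eq_zero_iff]
    rintro ⟨y, hy, hMy⟩
    rw [hfactor] at hMy
    obtain ⟨hKy, hSy⟩ := hBA0.map_ofReal.mulVec_eq_zero_of_smul_add_I_smul_mulVec_eq_zero
      hAA0.isHermitian_map_ofReal (by simpa using hξ) hξ hMy
    exact hKaw y 0 hy (by rw [hSy, zero_smul]) hKy
  rw [det_mul] at hdet
  have hM : IsUnit M := (isUnit_iff_isUnit_det M).mpr (left_ne_zero_of_mul hdet).isUnit
  exact ⟨mulVec_injective_iff_isUnit.mpr hM, mulVec_surjective_iff_isUnit.mpr hM⟩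

/-- **Symmetrizability plus the Kawashima condition imply steady invertibility.**
Let `A, B, A⁰` be real `n×n` matrices with `A⁰` symmetric positive definite,
`A A⁰` symmetric, `B A⁰` symmetric positive semidefinite, and assume no nonzero
eigenvector of `A A⁰` (over `ℂ`) lies in the kernel of `B A⁰`.  Then for every
`ξ ≠ 0` the complex matrix `−ξ² B + iξ A` is bijective on `ℂⁿ`. -/
theorem symmetrizable_kawashima_invertibility
    (n : ℕ) (hn : 1 ≤ n) (A B A0 : Matrix (Fin n) (Fin n) ℝ)
    (hA0 : A0.PosDef)
    (hAA0 : (A * A0).IsSymm)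
    (hBA0 : (B * A0).PosSemidef)
    (hKaw : ∀ (x : Fin n → ℂ) (μ : ℂ), x ≠ 0 →
      (A * A0).map Complex.ofReal *ᵥ x = μ • x →
      (B * A0).map Complex.ofReal *ᵥ x ≠ 0) :
    ∀ ξ : ℝ, ξ ≠ 0 →
      Function.Bijective (fun x : Fin n → ℂ =>
        ((-(ξ : ℂ) ^ 2) • B.map Complex.ofReal
          + ((ξ : ℂ) * Complex.I) • A.map Complex.ofReal) *ᵥ x) :=
  symmetrizable_kawashima_invertibility_general n A B A0 hAA0 hBA0 hKaw
end

section
/- Symmetrizability and the Kawashima condition for the linearized compressible Navier–Stokes system at the reference state: Let γ > 1, s_L = √γ, and let μ, λ, κ > 0 be real numbers. Define 5×5 real matrices: G with G₁₂ = 1, G₂₅ = γ−1, G₅₂ = γ/(γ−1), and all other entries 0; A₀ equal to the identity matrix except that (A₀)₁₅ = (A₀)₅₁ = 1/(γ−1) and (A₀)₅₅ = γ/(γ−1)²; and B with B₂₂ = 2μ+λ, B₃₃ = B₄₄ = μ, B₅₁ = −κ, B₅₅ = (γ−1)κ, and all other entries 0. Then: (a) A₀ is symmetric positive definite; (b) G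 A₀ is symmetric; (c) B A₀ equals the diagonal matrix diag(0, 2μ+λ, μ, μ, κ); in particular B A₀ is symmetric positive semidefinite and its kernel is spanned by e₁; (d) ((G − s_L I) A₀) e₁ = (−s_L, 1, 0, 0, −s_L/(γ−1))ᵀ, so e₁ is not an eigenvector of (G − s_L I) A₀; consequently no nonzero eigenvector of (G − s_L I) A₀ (over ℂ) lies in the kernel of B A₀, i.e., the Kawashima condition holds. -/
noncomputable section

open Matrix

/-- The Jacobian `G = ∇F(U_L)` of the Euler flux at the reference state. -/
def eulerG (gam : ℝ) : Matrix (Fin 5) (Fin 5) ℝ :=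
  !![0, 1, 0, 0, 0;
     0, 0, 0, 0, gam - 1;
     0, 0, 0, 0, 0;
     0, 0, 0, 0, 0;
     0, gam / (gam - 1), 0, 0, 0]

/-- The symmetrizer `A₀` of the linearized compressible Navier–Stokes system. -/
def nsA0 (gam : ℝ) : Matrix (Fin 5) (Fin 5) ℝ :=
  !![1, 0, 0, 0, 1 / (gam - 1);
     0, 1, 0, 0, 0;
     0, 0, 1, 0, 0;
     0, 0, 0, 1, 0;
     1 / (gam - 1), 0, 0, 0, gam / (gam - 1) ^ 2]

/-- The dissipation matrix `B` of the linearized compressible Navier–Stokes system. -/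
def nsB (gam muv lamv kapv : ℝ) : Matrix (Fin 5) (Fin 5) ℝ :=
  !![0, 0, 0, 0, 0;
     0, 2 * muv + lamv, 0, 0, 0;
     0, 0, muv, 0, 0;
     0, 0, 0, muv, 0;
     -kapv, 0, 0, 0, (gam - 1) * kapv]

/-! A₀ is positive definite by completing the square in its quadratic form, and B A₀ is
diagonal with a single zero entry, so its kernel is the line through e₁. The first column of
(G − s_L I)A₀ has a nonzero entry off the diagonal, so e₁ is not an eigenvector; an eigenvector
lying in the kernel of B A₀ is a multiple of e₁ and must therefore vanish. -/

namespace Matrix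

variable {n R : Type*} [Fintype n] [DecidableEq n]

theorem diagonal_mulVec_eq_zero_iff_eq_smul_single [Semiring R] [NoZeroDivisors R]
    {d : n → R} {i₀ : n} (h₀ : d i₀ = 0) (hd : ∀ i ≠ i₀, d i ≠ 0) (x : n → R) :
    diagonal d *ᵥ x = 0 ↔ ∃ t : R, x = t • Pi.single i₀ 1 := by
  constructor
  · intro h
    refine ⟨x i₀, funext fun i => ?_⟩
    rcases eq_or_ne i i₀ with rfl | hi
    · simp
    · have hxi : x i = 0 := by simpa [mulVec_diagonal, hd i hi] using congrFun h i
      simp [hi, hxi]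
  · rintro ⟨t, rfl⟩
    funext i
    rcases eq_or_ne i i₀ with rfl | hi <;> simp [mulVec_diagonal, *]

variable {M : Matrix n n R} {i j : n}

theorem mulVec_single_ne_smul_single [NonAssocSemiring R] (hji : j ≠ i) (hM : M j i ≠ 0) (μ : R) :
    M *ᵥ Pi.single i 1 ≠ μ • Pi.single i 1 := by
  intro h
  exact hM (by simpa [mulVec_single_one, hji] using congrFun h j)

theorem eq_zero_of_mulVec_eq_smul_of_eq_smul_single [CommSemiring R] [NoZeroDivisors R]
    (hji : j ≠ i) (hM : M j i ≠ 0) {x : n → R} {μ t : R} (hx : x = t • Pi.single i 1)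
    (heig : M *ᵥ x = μ • x) : x = 0 := by
  subst hx
  have ht : t * M j i = 0 := by
    simpa [mulVec_smul, mulVec_single_one, hji] using congrFun heig j
  simp [(mul_eq_zero.mp ht).resolve_right hM]

end Matrix

section ReferenceState

variable {gam : ℝ}

theorem nsA0_isSymm (gam : ℝ) : (nsA0 gam).IsSymm :=
  IsSymm.ext fun i j => by fin_cases i <;> fin_cases j <;> rfl

theorem nsA0_dotProduct_mulVec_self (hgam : gam ≠ 1) (x : Fin 5 → ℝ) :
    x ⬝ᵥ nsA0 gam *ᵥ x = (x 0 + x 4 / (gam - 1)) ^ 2 + x 1 ^ 2 + x 2 ^ 2 + x 3 ^ 2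
      + x 4 ^ 2 / (gam - 1) := by
  have : gam - 1 ≠ 0 := sub_ne_zero.mpr hgam
  simp [nsA0, mulVec, dotProduct, Fin.sum_univ_five]
  field_simp
  ring

theorem nsA0_posDef (hgam : 1 < gam) : (nsA0 gam).PosDef := by
  have hg : 0 < gam - 1 := sub_pos.mpr hgam
  refine PosDef.of_dotProduct_mulVec_pos (nsA0_isSymm gam) fun x hx => ?_
  rw [star_trivial, nsA0_dotProduct_mulVec_self hgam.ne']
  by_cases h4 : x 4 = 0
  · obtain ⟨i, hi⟩ := Function.ne_iff.mp hx
    simp only [h4]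
    fin_cases i <;> simp_all <;> positivity
  · positivity

theorem eulerG_mul_nsA0_isSymm (hgam : gam ≠ 1) : (eulerG gam * nsA0 gam).IsSymm := by
  have : gam - 1 ≠ 0 := sub_ne_zero.mpr hgam
  refine IsSymm.ext fun i j => ?_
  fin_cases i <;> fin_cases j <;> simp [eulerG, nsA0, mul_apply, Fin.sum_univ_five] <;> field_simp

theorem nsB_mul_nsA0 (hgam : gam ≠ 1) (muv lamv kapv : ℝ) :
    nsB gam muv lamv kapv * nsA0 gam = diagonal ![0, 2 * muv + lamv, muv, muv, kapv] := by
  have : gam - 1 ≠ 0 := sub_ne_zero.mpr hgam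
  ext i j
  fin_cases i <;> fin_cases j <;> simp [nsB, nsA0, mul_apply, Fin.sum_univ_five] <;> field_simp
    <;> ring

theorem eulerG_sub_smul_one_mul_nsA0_mulVec_single (hgam : gam ≠ 1) :
    ((eulerG gam - Real.sqrt gam • 1) * nsA0 gam) *ᵥ Pi.single 0 1
      = ![-Real.sqrt gam, 1, 0, 0, -Real.sqrt gam / (gam - 1)] := by
  have : gam - 1 ≠ 0 := sub_ne_zero.mpr hgam
  funext i
  fin_cases i <;> simp [eulerG, nsA0, sub_mul, mulVec, dotProduct, Fin.sum_univ_five, mul_apply,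
    one_apply, Pi.single_apply] <;> field_simp

end ReferenceState

theorem ns_dissipation_pos {muv lamv kapv : ℝ} (hmu : 0 < muv) (hlam : 0 < lamv)
    (hkap : 0 < kapv) : ∀ i ≠ 0, 0 < ![0, 2 * muv + lamv, muv, muv, kapv] i := by
  intro i hi
  fin_cases i <;> simp_all
  positivity

/-- **Symmetrizability and the Kawashima condition for the linearized compressible
Navier–Stokes system at the reference state.** -/
theorem navier_stokes_symmetrizable_kawashima
    (gam muv lamv kapv : ℝ) (hgam : 1 < gam)
    (hmu : 0 < muv) (hlam : 0 < lamv) (hkap : 0 < kapv) :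
    -- (a) A₀ is symmetric positive definite
    ((nsA0 gam).IsSymm ∧ (nsA0 gam).PosDef) ∧
    -- (b) G A₀ is symmetric
    (eulerG gam * nsA0 gam).IsSymm ∧
    -- (c) B A₀ is the stated diagonal matrix; it is symmetric positive semidefinite
    --     and its kernel is spanned by e₁
    (nsB gam muv lamv kapv * nsA0 gam
        = Matrix.diagonal ![0, 2 * muv + lamv, muv, muv, kapv] ∧
      (nsB gam muv lamv kapv * nsA0 gam).PosSemidef ∧
      (∀ x : Fin 5 → ℝ, (nsB gam muv lamv kapv * nsA0 gam) *ᵥ x = 0 ↔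
        ∃ t : ℝ, x = t • (Pi.single 0 1 : Fin 5 → ℝ))) ∧
    -- (d) e₁ is not an eigenvector of (G − s_L I)A₀, and the Kawashima condition holds
    (((eulerG gam - Real.sqrt gam • 1) * nsA0 gam) *ᵥ Pi.single 0 1
        = ![-Real.sqrt gam, 1, 0, 0, -Real.sqrt gam / (gam - 1)] ∧
      (∀ μc : ℝ, ((eulerG gam - Real.sqrt gam • 1) * nsA0 gam) *ᵥ Pi.single 0 1
        ≠ μc • (Pi.single 0 1 : Fin 5 → ℝ)) ∧
      (∀ (x : Fin 5 → ℂ) (μc : ℂ),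
        ((eulerG gam - Real.sqrt gam • 1) * nsA0 gam).map Complex.ofReal *ᵥ x = μc • x →
        (nsB gam muv lamv kapv * nsA0 gam).map Complex.ofReal *ᵥ x = 0 →
        x = 0)) := by
  have hg : gam ≠ 1 := hgam.ne'
  have hdiss := ns_dissipation_pos hmu hlam hkap
  have hcol := eulerG_sub_smul_one_mul_nsA0_mulVec_single hg
  have hM : ((eulerG gam - Real.sqrt gam • 1) * nsA0 gam) 1 0 = 1 := by
    simpa [mulVec_single_one] using congrFun hcol 1
  refine ⟨⟨nsA0_isSymm gam, nsA0_posDef hgam⟩, eulerG_mul_nsA0_isSymm hg,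
    ⟨nsB_mul_nsA0 hg muv lamv kapv, ?_, ?_⟩, hcol,
    mulVec_single_ne_smul_single (j := 1) (by decide) (by simp [hM]), ?_⟩
  · rw [nsB_mul_nsA0 hg, posSemidef_diagonal_iff]
    intro i
    rcases eq_or_ne i 0 with rfl | hi
    · rfl
    · exact (hdiss i hi).le
  · rw [nsB_mul_nsA0 hg]
    exact diagonal_mulVec_eq_zero_iff_eq_smul_single rfl fun i hi => (hdiss i hi).ne'
  · intro x μc heig hker
    rw [nsB_mul_nsA0 hg, diagonal_map Complex.ofReal_zero] at hker
    obtain ⟨t, ht⟩ := (diagonal_mulVec_eq_zero_iff_eq_smul_single (by simp)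
      (fun i hi => Complex.ofReal_ne_zero.mpr (hdiss i hi).ne') x).mp hker
    exact eq_zero_of_mulVec_eq_smul_of_eq_smul_single (j := 1) (by decide) (by simp [hM]) ht heig
end
end

section
/- Hyperbolicity of the linearized traveling-wave system on the slaved manifold: Under the viscous conservation-law setting and assumptions (C1), (C2), (C3), let X₂ = ker(P_I A) ⊆ ℝⁿ, which has dimension m by (C1). By (C1), B(u_L) maps X₂ bijectively onto {0} × ℝ^m, and A maps X₂ into {0} × ℝ^m, so there is a unique linear map T : X₂ → X₂ with B(u_L)(T w) = A w for all w ∈ X₂. Then: (a) the complexification of T has no nonzero purely imaginary eigenvalue; (b) 0 is an eigenvalue of T (indeed T r_p = 0, since r_p ∈ X₂ and A r_p = 0) and its algebraic multiplicity equals one. -/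
noncomputable section

open Matrix

/-- The Jacobian matrix of a map `f : ℝⁿ → ℝⁿ` at a point. -/
def jac {n : ℕ} (f : (Fin n → ℝ) → (Fin n → ℝ)) (u : Fin n → ℝ) :
    Matrix (Fin n) (Fin n) ℝ :=
  Matrix.of fun i j => fderiv ℝ f u (Pi.single j 1) i

/-- The slaved subspace `X₂ = ker(P_I A) ⊆ ℝⁿ`: vectors whose image under `A`
vanishes in the first `n − m` coordinates. -/
def slavedX2 (n m : ℕ) (A : Matrix (Fin n) (Fin n) ℝ) : Submodule ℝ (Fin n → ℝ) :=
  ⨅ i : {i : Fin n // (i : ℕ) < n - m},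
    LinearMap.ker ((LinearMap.proj (i : Fin n)).comp (Matrix.mulVecLin A))

open Polynomial in
/-- Characteristic polynomials are invariant under conjugation. -/
lemma charpoly_conj' {n : ℕ} (P M : Matrix (Fin n) (Fin n) ℝ) (h : IsUnit P.det) :
    (P * M * P⁻¹).charpoly = M.charpoly := by
  have hPP : P * P⁻¹ = 1 := mul_nonsing_inv P h
  have hcomm : ∀ N : Matrix (Fin n) (Fin n) ℝ[X],
      Matrix.scalar (Fin n) (X : ℝ[X]) * N = N * Matrix.scalar (Fin n) (X : ℝ[X]) :=
    fun N => (scalar_commute (X : ℝ[X]) (fun r' => mul_comm _ _) N).eq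
  have key : charmatrix (P * M * P⁻¹)
      = (C : ℝ →+* ℝ[X]).mapMatrix P * charmatrix M * (C : ℝ →+* ℝ[X]).mapMatrix P⁻¹ := by
    unfold charmatrix
    rw [mul_sub, sub_mul, _root_.map_mul, _root_.map_mul]
    congr 1
    rw [← hcomm, mul_assoc, ← _root_.map_mul, hPP, _root_.map_one, mul_one]
  rw [Matrix.charpoly, key, det_mul, det_mul, mul_comm, ← mul_assoc]
  rw [← RingHom.map_det, ← RingHom.map_det, ← _root_.map_mul, ← det_mul,
    nonsing_inv_mul P h, det_one, _root_.map_one, one_mul]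
  rfl

open Polynomial in
/-- Characteristic polynomial of a diagonal matrix. -/
lemma charpoly_diag' {n : ℕ} (d : Fin n → ℝ) :
    (Matrix.diagonal d).charpoly = ∏ i, (X - C (d i)) := by
  have : charmatrix (Matrix.diagonal d) = Matrix.diagonal (fun i => X - C (d i)) := by
    ext i j
    by_cases hij : i = j
    · subst hij; simp [charmatrix_apply_eq]
    · simp [charmatrix_apply_ne _ _ _ hij, Matrix.diagonal_apply_ne _ hij,
        Matrix.diagonal_apply_ne d hij]
  rw [Matrix.charpoly, this, det_diagonal]

/-- Membership criterion for the slaved subspace. -/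
lemma mem_slavedX2' {n m : ℕ} {A : Matrix (Fin n) (Fin n) ℝ} {w : Fin n → ℝ} :
    w ∈ slavedX2 n m A ↔ ∀ i : Fin n, (i : ℕ) < n - m → (A *ᵥ w) i = 0 := by
  simp [slavedX2, Submodule.mem_iInf, Subtype.forall]

open Polynomial in
/-- If the shifted matrix is diagonalizable and `sL` is an algebraically simple
eigenvalue with eigenvector `rp`, then `ker (J - sL) = span rp`. -/
lemma kerA_le_span {n : ℕ} (J : Matrix (Fin n) (Fin n) ℝ) (sL : ℝ) (rp lp : Fin n → ℝ)
    (hrp : J *ᵥ rp = sL • rp) (hnorm : lp ⬝ᵥ rp = 1)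
    (hsimple : J.charpoly.rootMultiplicity sL = 1)
    (hdiag : ∃ (P : Matrix (Fin n) (Fin n) ℝ) (d : Fin n → ℝ),
      IsUnit P.det ∧ J = P * Matrix.diagonal d * P⁻¹) :
    ∀ w : Fin n → ℝ, (J - sL • 1) *ᵥ w = 0 → ∃ c : ℝ, w = c • rp := by
  classical
  have hrpne : rp ≠ 0 := by
    intro h; rw [h, dotProduct_zero] at hnorm; exact zero_ne_one hnorm
  obtain ⟨P, d, hPdet, hPD⟩ := hdiag
  have hPP : P * P⁻¹ = 1 := mul_nonsing_inv P hPdet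
  have hPP' : P⁻¹ * P = 1 := nonsing_inv_mul P hPdet
  have hroots : J.charpoly = ∏ i, (X - C (d i)) := by
    rw [hPD, charpoly_conj' P _ hPdet, charpoly_diag']
  have hcount : (Finset.univ.val.map d).count sL = 1 := by
    have h1 : (∏ i, (X - C (d i))).roots = Finset.univ.val.map d := by
      rw [Finset.prod_eq_multiset_prod,
        show Multiset.map (fun i => X - C (d i)) Finset.univ.val
            = Multiset.map (fun a => X - C a) (Multiset.map d Finset.univ.val) from
          (Multiset.map_map (fun a => X - C a) d Finset.univ.val).symm]
      exact roots_multiset_prod_X_sub_C _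
    have h2 := Polynomial.count_roots (a := sL) (∏ i, (X - C (d i)))
    rw [h1] at h2
    rw [h2, ← hroots, hsimple]
  obtain ⟨i0, hi0⟩ : ∃ i0 : Fin n, ∀ i, d i = sL ↔ i = i0 := by
    rw [Multiset.count_map] at hcount
    obtain ⟨i0, hi0⟩ := Multiset.card_eq_one.1 hcount
    refine ⟨i0, fun i => ?_⟩
    constructor
    · intro h
      have : i ∈ Multiset.filter (fun a => sL = d a) Finset.univ.val := by
        rw [Multiset.mem_filter]
        exact ⟨Finset.mem_univ_val i, h.symm⟩
      rw [hi0, Multiset.mem_singleton] at this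
      exact this
    · intro h
      have hmem : i0 ∈ Multiset.filter (fun a => sL = d a) Finset.univ.val := by
        rw [hi0]; exact Multiset.mem_singleton_self i0
      rw [h]
      exact ((Multiset.mem_filter.1 hmem).2).symm
  have key : ∀ w : Fin n → ℝ, (J - sL • 1) *ᵥ w = 0 →
      w = ((P⁻¹ *ᵥ w) i0) • (P *ᵥ Pi.single i0 1) := by
    intro w hw
    have h1 : J *ᵥ w = sL • w := by
      have h0 : (J - sL • 1) *ᵥ w = J *ᵥ w - sL • w := by
        rw [sub_mulVec, smul_mulVec, one_mulVec]
      rw [h0] at hw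
      exact sub_eq_zero.1 hw
    have hDv : Matrix.diagonal d *ᵥ (P⁻¹ *ᵥ w) = sL • (P⁻¹ *ᵥ w) := by
      have h2 : P⁻¹ *ᵥ (J *ᵥ w) = sL • (P⁻¹ *ᵥ w) := by rw [h1, mulVec_smul]
      rw [mulVec_mulVec, hPD,
        show P⁻¹ * (P * Matrix.diagonal d * P⁻¹) = Matrix.diagonal d * P⁻¹ by
          rw [← mul_assoc, ← mul_assoc, hPP', one_mul],
        ← mulVec_mulVec] at h2
      exact h2
    have hv : P⁻¹ *ᵥ w = ((P⁻¹ *ᵥ w) i0) • (Pi.single i0 1 : Fin n → ℝ) := by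
      funext j
      by_cases hj : j = i0
      · subst hj; simp
      · have hdj : d j ≠ sL := fun h => hj ((hi0 j).1 h)
        have h3 : d j * (P⁻¹ *ᵥ w) j = sL * (P⁻¹ *ᵥ w) j := by
          have := congrFun hDv j
          rwa [mulVec_diagonal] at this
        have h4 : (P⁻¹ *ᵥ w) j = 0 := by
          by_contra h
          exact hdj (mul_right_cancel₀ h h3)
        simp [h4, Pi.single_eq_of_ne hj]
    calc w = P *ᵥ (P⁻¹ *ᵥ w) := by rw [mulVec_mulVec, hPP, one_mulVec]
      _ = ((P⁻¹ *ᵥ w) i0) • (P *ᵥ Pi.single i0 1) := by rw [hv, mulVec_smul]; simp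
  intro w hw
  have hrp0 : (J - sL • 1) *ᵥ rp = 0 := by
    rw [sub_mulVec, hrp, smul_mulVec, one_mulVec, sub_self]
  have hwrep := key w hw
  have hrprep := key rp hrp0
  have hc' : (P⁻¹ *ᵥ rp) i0 ≠ 0 := by
    intro h; rw [h, zero_smul] at hrprep; exact hrpne hrprep
  refine ⟨(P⁻¹ *ᵥ w) i0 / (P⁻¹ *ᵥ rp) i0, ?_⟩
  calc w = (P⁻¹ *ᵥ w) i0 • (P *ᵥ Pi.single i0 1) := hwrep
    _ = ((P⁻¹ *ᵥ w) i0 / (P⁻¹ *ᵥ rp) i0) • ((P⁻¹ *ᵥ rp) i0 • (P *ᵥ Pi.single i0 1)) := by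
        rw [smul_smul, div_mul_cancel₀ _ hc']
    _ = ((P⁻¹ *ᵥ w) i0 / (P⁻¹ *ᵥ rp) i0) • rp := by rw [← hrprep]

/-- **Hyperbolicity of the linearized traveling-wave system on the slaved
manifold** (under assumptions (C1), (C2), (C3)). -/
theorem slaved_manifold_hyperbolicity
    (n m : ℕ) (hm : 1 ≤ m) (hmn : m < n)
    (U : Set (Fin n → ℝ)) (hUopen : IsOpen U)
    (uL : Fin n → ℝ) (huL : uL ∈ U)
    (f : (Fin n → ℝ) → (Fin n → ℝ)) (hf : ContDiffOn ℝ (⊤ : ℕ∞) f U)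
    (hdiag : ∀ u ∈ U, ∃ (P : Matrix (Fin n) (Fin n) ℝ) (d : Fin n → ℝ),
      IsUnit P.det ∧ jac f u = P * Matrix.diagonal d * P⁻¹)
    (B : (Fin n → ℝ) → Matrix (Fin n) (Fin n) ℝ)
    (hB : ∀ i j : Fin n, ContDiffOn ℝ (⊤ : ℕ∞) (fun u => B u i j) U)
    (hBblock : ∀ u ∈ U, ∀ i j : Fin n, (i : ℕ) < n - m → B u i j = 0)
    (sL : ℝ) (rp lp : Fin n → ℝ)
    (hrp : jac f uL *ᵥ rp = sL • rp)
    (hlp : lp ᵥ* jac f uL = sL • lp)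
    (hnorm : lp ⬝ᵥ rp = 1)
    (hsimple : (jac f uL).charpoly.rootMultiplicity sL = 1)
    (hC1 : IsUnit (Matrix.of fun i j : Fin n =>
      if (i : ℕ) < n - m then (jac f uL - sL • 1) i j else B uL i j).det)
    (hC2 : ∀ ξ : ℝ, ξ ≠ 0 → ∀ x : Fin n → ℂ,
      (∀ i : Fin n, (i : ℕ) < n - m →
        (((jac f uL - sL • 1).map Complex.ofReal) *ᵥ x) i = 0) →
      ((-(ξ : ℂ) ^ 2) • (B uL).map Complex.ofReal
        + ((ξ : ℂ) * Complex.I) • (jac f uL - sL • 1).map Complex.ofReal) *ᵥ x = 0 →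
      x = 0)
    (hC3 : 0 < lp ⬝ᵥ (B uL *ᵥ rp)) :
    -- For the (unique) linear map T : X₂ → X₂ with B(u_L)(Tw) = Aw on X₂ :
    ∀ T : (Fin n → ℝ) →ₗ[ℝ] (Fin n → ℝ),
      (∀ w ∈ slavedX2 n m (jac f uL - sL • 1), T w ∈ slavedX2 n m (jac f uL - sL • 1)) →
      (∀ w ∈ slavedX2 n m (jac f uL - sL • 1), B uL *ᵥ T w = (jac f uL - sL • 1) *ᵥ w) →
      -- (a) the complexification of T has no nonzero purely imaginary eigenvalue
      ((∀ τ : ℝ, τ ≠ 0 → ∀ x : Fin n → ℂ,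
        (∀ i : Fin n, (i : ℕ) < n - m →
          (((jac f uL - sL • 1).map Complex.ofReal) *ᵥ x) i = 0) →
        (fun j => ((T fun i => (x i).re) j : ℂ)
            + Complex.I * ((T fun i => (x i).im) j : ℂ))
          = ((τ : ℂ) * Complex.I) • x →
        x = 0) ∧
      -- (b) 0 is an eigenvalue (T r_p = 0) of algebraic multiplicity one
      (T rp = 0 ∧
        Module.finrank ℝ
          ↥(⨆ k : ℕ, (slavedX2 n m (jac f uL - sL • 1) ⊓ LinearMap.ker (T ^ k))) = 1)) := by
  intro T hT1 hT2
  set A : Matrix (Fin n) (Fin n) ℝ := jac f uL - sL • 1 with hAdef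
  have hrpA : A *ᵥ rp = 0 := by
    rw [hAdef, sub_mulVec, hrp, smul_mulVec, one_mulVec, sub_self]
  have hlpA : lp ᵥ* A = 0 := by
    have hsm1 : lp ᵥ* (sL • (1 : Matrix (Fin n) (Fin n) ℝ)) = sL • lp := by
      funext j
      simp [Matrix.vecMul, dotProduct, Matrix.smul_apply, Matrix.one_apply, mul_comm]
    rw [hAdef, vecMul_sub, hlp, hsm1, sub_self]
  have hrpne : rp ≠ 0 := by
    intro h; rw [h, dotProduct_zero] at hnorm; exact zero_ne_one hnorm
  have hrpX2 : rp ∈ slavedX2 n m A := mem_slavedX2'.2 (fun i _ => by rw [hrpA]; rfl)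
  -- injectivity of B on X₂, from (C1)
  have hBinj : ∀ w ∈ slavedX2 n m A, B uL *ᵥ w = 0 → w = 0 := by
    intro w hw hBw
    have hMw : (Matrix.of fun i j : Fin n =>
        if (i : ℕ) < n - m then A i j else B uL i j) *ᵥ w = 0 := by
      funext i
      by_cases hi : (i : ℕ) < n - m
      · have h0 := (mem_slavedX2'.1 hw) i hi
        simpa [Matrix.mulVec, dotProduct, hi] using h0
      · have h0 : (B uL *ᵥ w) i = 0 := by rw [hBw]; rfl
        simpa [Matrix.mulVec, dotProduct, hi] using h0
    have hinj : Function.Injective ((Matrix.of fun i j : Fin n =>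
        if (i : ℕ) < n - m then A i j else B uL i j).mulVec) :=
      mulVec_injective_iff_isUnit.2 ((Matrix.isUnit_iff_isUnit_det _).2 hC1)
    exact hinj (by rw [hMw, Matrix.mulVec_zero])
  have hTrp : T rp = 0 := hBinj _ (hT1 rp hrpX2) (by rw [hT2 rp hrpX2, hrpA])
  -- kernel of A is spanned by rp
  have hkerA : ∀ w : Fin n → ℝ, A *ᵥ w = 0 → ∃ c : ℝ, w = c • rp := by
    rw [hAdef]
    exact kerA_le_span (jac f uL) sL rp lp hrp hnorm hsimple (hdiag uL huL)
  constructor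
  · -- part (a)
    intro τ hτ x hx heig
    set xr : Fin n → ℝ := fun i => (x i).re with hxrdef
    set xi : Fin n → ℝ := fun i => (x i).im with hxidef
    have hxr : ∀ j, (x j).re = xr j := fun _ => rfl
    have hxi : ∀ j, (x j).im = xi j := fun _ => rfl
    have hmv : ∀ (M : Matrix (Fin n) (Fin n) ℝ) (i : Fin n),
        ((M.map Complex.ofReal) *ᵥ x) i
          = ((M *ᵥ xr) i : ℂ) + ((M *ᵥ xi) i : ℂ) * Complex.I := by
      intro M i
      simp only [Matrix.mulVec, dotProduct, Matrix.map_apply]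
      push_cast
      rw [Finset.sum_mul, ← Finset.sum_add_distrib]
      refine Finset.sum_congr rfl fun j _ => ?_
      have hxj : x j = (xr j : ℂ) + (xi j : ℂ) * Complex.I := (Complex.re_add_im (x j)).symm
      rw [hxj]; ring
    have hsplit : ∀ i : Fin n, (i : ℕ) < n - m → (A *ᵥ xr) i = 0 ∧ (A *ᵥ xi) i = 0 := by
      intro i hi
      have h0 := hx i hi
      rw [hmv A i] at h0
      have hre := congrArg Complex.re h0
      have him := congrArg Complex.im h0
      constructor
      · simpa using hre
      · simpa using him
    have hxrX2 : xr ∈ slavedX2 n m A := mem_slavedX2'.2 fun i hi => (hsplit i hi).1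
    have hxiX2 : xi ∈ slavedX2 n m A := mem_slavedX2'.2 fun i hi => (hsplit i hi).2
    have hsplit2 : ∀ j, T xr j = -(τ * xi j) ∧ T xi j = τ * xr j := by
      intro j
      have hj := congrFun heig j
      simp only [Pi.smul_apply, smul_eq_mul] at hj
      have hre := congrArg Complex.re hj
      have him := congrArg Complex.im hj
      constructor
      · simpa [Complex.mul_re, Complex.mul_im, hxr, hxi] using hre
      · simpa [Complex.mul_re, Complex.mul_im, hxr, hxi] using him
    have hTxr : T xr = (-τ) • xi := by
      funext j
      simp only [Pi.smul_apply, smul_eq_mul]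
      rw [(hsplit2 j).1]; ring
    have hTxi : T xi = τ • xr := by
      funext j
      simp only [Pi.smul_apply, smul_eq_mul]
      rw [(hsplit2 j).2]
    have hAxr : A *ᵥ xr = (-τ) • (B uL *ᵥ xi) := by
      have h := hT2 xr hxrX2
      rw [hTxr, mulVec_smul] at h
      exact h.symm
    have hAxi : A *ᵥ xi = τ • (B uL *ᵥ xr) := by
      have h := hT2 xi hxiX2
      rw [hTxi, mulVec_smul] at h
      exact h.symm
    refine hC2 (-τ) (neg_ne_zero.2 hτ) x hx ?_
    funext i
    have h1 := congrFun hAxr i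
    have h2 := congrFun hAxi i
    simp only [Pi.smul_apply, smul_eq_mul] at h1 h2
    rw [add_mulVec, smul_mulVec, smul_mulVec]
    simp only [Pi.add_apply, Pi.smul_apply, smul_eq_mul, Pi.zero_apply]
    rw [hmv (B uL) i, hmv A i, h1, h2]
    push_cast
    linear_combination (-(τ : ℂ) ^ 2 * ((B uL *ᵥ xr) i : ℂ)) * Complex.I_sq
  refine ⟨hTrp, ?_⟩
  -- part (b): the generalized kernel of T on X₂ is span rp
  have hsup : (⨆ k : ℕ, (slavedX2 n m A ⊓ LinearMap.ker (T ^ k))) = (ℝ ∙ rp) := by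
    apply le_antisymm
    · refine iSup_le fun k => ?_
      induction k with
      | zero =>
        intro w hw
        have hw0 : w = 0 := by simpa using hw.2
        simp [hw0]
      | succ k ih =>
        intro w hw
        obtain ⟨hwX, hwk⟩ := hw
        have hwk' : (T ^ (k + 1)) w = 0 := hwk
        have hTwk : (T ^ k) (T w) = 0 := by
          rw [pow_succ, Module.End.mul_apply] at hwk'; exact hwk'
        have hTwspan : T w ∈ (ℝ ∙ rp) := ih ⟨hT1 w hwX, hTwk⟩
        obtain ⟨c, hc⟩ := Submodule.mem_span_singleton.1 hTwspan
        have hBTw : B uL *ᵥ T w = A *ᵥ w := hT2 w hwX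
        have hdot : lp ⬝ᵥ (A *ᵥ w) = 0 := by
          rw [dotProduct_mulVec, hlpA, zero_dotProduct]
        have hc0 : c = 0 := by
          have hce : c * (lp ⬝ᵥ (B uL *ᵥ rp)) = 0 := by
            rw [← hdot, ← hBTw, ← hc, mulVec_smul, dotProduct_smul, smul_eq_mul]
          exact (mul_eq_zero.1 hce).resolve_right (ne_of_gt hC3)
        have hTw0 : T w = 0 := by rw [← hc, hc0, zero_smul]
        have hAw : A *ᵥ w = 0 := by rw [← hBTw, hTw0, mulVec_zero]
        obtain ⟨c2, hc2⟩ := hkerA w hAw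
        rw [hc2]
        exact Submodule.smul_mem _ _ (Submodule.mem_span_singleton_self rp)
    · rw [Submodule.span_singleton_le_iff_mem]
      refine Submodule.mem_iSup_of_mem 1 ?_
      exact ⟨hrpX2, by simp [LinearMap.mem_ker, pow_one, hTrp]⟩
  rw [hsup]
  exact finrank_span_singleton hrpne
end
end
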